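/- Assume Hypothesis (H). Then every Baire sup-measurable function F : ℝ × ℝ → ℝ has the Baire property; that is, there is no Baire sup-measurable function without the Baire property. -/

import Mathlib

/-!
Suppose `E = F ⁻¹' W` lacks the Baire property for some open `W`. Localizing, `E` and `Eᶜ` are
both nonmeagre in every nonempty open subset of some box `I₁ ×ˢ I₂`. Binary expansion maps the
sequences that are not eventually constant, a comeagre subset of `2^ω`, homeomorphically onto a
co-countable subset of `(0, 1)`, hence of any interval. Through two such codings `ψ₁`, `ψ₂` the
set `A = (ψ₁ × ψ₂)⁻¹ E` and its complement are nowhere meagre, so (H) gives a homeomorphism `f`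
for which `{x | (x, f x) ∈ A}` lacks the Baire property. But `g = ψ₂ ∘ f ∘ ψ₁⁻¹`, extended by a
constant, has the Baire property, and `{x | (x, f x) ∈ A}` agrees off a meagre set with
`ψ₁ ⁻¹' {t | F (t, g t) ∈ W}`, which has it because `F` is Baire sup-measurable.
-/

open scoped symmDiff

/-- A set has the Baire property if it equals the symmetric difference of an
open set and a meager set. -/
def HasBaireProperty {X : Type*} [TopologicalSpace X] (S : Set X) : Prop :=
  ∃ U M : Set X, IsOpen U ∧ IsMeagre M ∧ S = U ∆ M

/-- A function has the Baire property if the preimage of every open set has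
the Baire property. -/
def BaireFunction {X Y : Type*} [TopologicalSpace X] [TopologicalSpace Y] (g : X → Y) : Prop :=
  ∀ U : Set Y, IsOpen U → HasBaireProperty (g ⁻¹' U)

/-- `F : ℝ × ℝ → ℝ` is Baire sup-measurable if for every `f : ℝ → ℝ` with the Baire
property, the function `x ↦ F (x, f x)` has the Baire property. -/
def BaireSupMeasurable (F : ℝ × ℝ → ℝ) : Prop :=
  ∀ f : ℝ → ℝ, BaireFunction f → BaireFunction (fun x => F (x, f x))

/-- A set `A` is nowhere meager in `X` if `A ∩ U` is nonmeager for every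
nonempty open `U ⊆ X`. -/
def NowhereMeager {X : Type*} [TopologicalSpace X] (A : Set X) : Prop :=
  ∀ U : Set X, IsOpen U → U.Nonempty → ¬ IsMeagre (A ∩ U)

/-- Hypothesis (H): for every `A ⊆ 2^ω × 2^ω` such that both `A` and its complement
are nowhere meager, there is an autohomeomorphism `f` of the Cantor space `2^ω`
such that `{x : (x, f x) ∈ A}` does not have the Baire property. -/
def HypH : Prop :=
  ∀ A : Set ((ℕ → Bool) × (ℕ → Bool)),
    NowhereMeager A → NowhereMeager Aᶜ →
    ∃ f : (ℕ → Bool) ≃ₜ (ℕ → Bool),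
      ¬ HasBaireProperty {x : ℕ → Bool | (x, f x) ∈ A}

open Set Filter Topology

section BaireProperty

variable {X Y : Type*} [TopologicalSpace X] [TopologicalSpace Y]

theorem residualEq_iff_isMeagre_symmDiff {s t : Set X} : s =ᵇ t ↔ IsMeagre (s ∆ t) := by
  have : {x | x ∈ s ↔ x ∈ t} = (s ∆ t)ᶜ := by
    ext x
    simp only [mem_ofPred_eq, mem_compl_iff, mem_symmDiff]
    tauto
  rw [IsMeagre, eventuallyEq_set, Filter.Eventually, this]

theorem hasBaireProperty_iff_baireMeasurableSet {s : Set X} :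
    HasBaireProperty s ↔ BaireMeasurableSet s := by
  rw [BaireMeasurableSet.iff_residualEq_isOpen]
  constructor
  · rintro ⟨U, M, hU, hM, rfl⟩
    refine ⟨U, hU, residualEq_iff_isMeagre_symmDiff.2 ?_⟩
    rwa [symmDiff_comm, symmDiff_symmDiff_cancel_left]
  · rintro ⟨U, hU, hsU⟩
    refine ⟨U, U ∆ s, hU, ?_, (symmDiff_symmDiff_cancel_left U s).symm⟩
    rw [symmDiff_comm]
    exact residualEq_iff_isMeagre_symmDiff.1 hsU

theorem HasBaireProperty.congr {s t : Set X} (hs : HasBaireProperty s) (h : IsMeagre (s ∆ t)) :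
    HasBaireProperty t := by
  obtain ⟨U, M, hU, hM, rfl⟩ := hs
  refine ⟨U, M ∆ ((U ∆ M) ∆ t), hU, (hM.union h).mono symmDiff_le_sup, ?_⟩
  rw [← symmDiff_assoc, symmDiff_symmDiff_cancel_left]

theorem baireFunction_dite {s : Set X} [DecidablePred (· ∈ s)] (hs : HasBaireProperty s)
    {f : s → Y} (hf : Continuous f) (c : Y) :
    BaireFunction fun x => if h : x ∈ s then f ⟨x, h⟩ else c := by
  intro U hU
  obtain ⟨O, hO, hOU⟩ := isOpen_induced_iff.1 (hU.preimage hf)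
  have hs' := hasBaireProperty_iff_baireMeasurableSet.1 hs
  have hsO : BaireMeasurableSet (s ∩ O) := hs'.inter hO.baireMeasurableSet
  have hc : BaireMeasurableSet {_x : X | c ∈ U} := by
    by_cases hc : c ∈ U
    · simpa [hc] using isOpen_univ.baireMeasurableSet
    · simpa [hc] using isOpen_empty.baireMeasurableSet
  rw [hasBaireProperty_iff_baireMeasurableSet]
  convert hsO.union (hs'.compl.inter hc) using 1
  ext x
  by_cases hx : x ∈ s
  · simpa [hx] using (Iff.of_eq (congrArg (⟨x, hx⟩ ∈ ·) hOU)).symm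
  · simp [hx]

theorem exists_isOpen_isMeagre_inter_maximal [SecondCountableTopology X] (E : Set X) :
    ∃ U, IsOpen U ∧ IsMeagre (E ∩ U) ∧ ∀ V, IsOpen V → IsMeagre (E ∩ V) → V ⊆ U := by
  obtain ⟨𝒱, h𝒱c, h𝒱, hU⟩ :=
    TopologicalSpace.isOpen_sUnion_countable {V | IsOpen V ∧ IsMeagre (E ∩ V)} fun V hV => hV.1
  refine ⟨⋃₀ 𝒱, isOpen_sUnion fun V hV => (h𝒱 hV).1, ?_, fun V hV hEV => ?_⟩
  · rw [sUnion_eq_biUnion, inter_iUnion₂]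
    exact isMeagre_biUnion h𝒱c fun V hV => (h𝒱 hV).2
  · rw [hU]
    exact subset_sUnion_of_mem ⟨hV, hEV⟩

theorem exists_isOpen_forall_not_isMeagre [SecondCountableTopology X] {E : Set X}
    (hE : ¬HasBaireProperty E) :
    ∃ V, IsOpen V ∧ V.Nonempty ∧ ∀ U, IsOpen U → U ⊆ V → U.Nonempty →
      ¬IsMeagre (E ∩ U) ∧ ¬IsMeagre (Eᶜ ∩ U) := by
  obtain ⟨U₁, hU₁, hEU₁, hmax₁⟩ := exists_isOpen_isMeagre_inter_maximal E
  obtain ⟨U₂, hU₂, hEU₂, hmax₂⟩ := exists_isOpen_isMeagre_inter_maximal Eᶜ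
  have hV : IsOpen (closure (U₁ ∪ U₂))ᶜ := isClosed_closure.isOpen_compl
  refine ⟨_, hV, ?_, fun U hU hUV ⟨x, hx⟩ => ⟨fun h => ?_, fun h => ?_⟩⟩
  · by_contra hempty
    apply hE
    have hnd : IsNowhereDense (U₁ ∪ U₂)ᶜ := by
      rw [(hU₁.union hU₂).isClosed_compl.isNowhereDense_iff, interior_compl,
        ← not_nonempty_iff_eq_empty]
      exact hempty
    refine ⟨U₂, U₂ ∆ E, hU₂, ?_, (symmDiff_symmDiff_cancel_left U₂ E).symm⟩
    refine ((hEU₁.union hEU₂).union hnd.isMeagre).mono fun y hy => ?_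
    simp only [mem_symmDiff, mem_union, mem_inter_iff, mem_compl_iff] at hy ⊢
    tauto
  · exact hUV hx (subset_closure (Or.inl (hmax₁ U hU h hx)))
  · exact hUV hx (subset_closure (Or.inr (hmax₂ U hU h hx)))

end BaireProperty

section Meagre

variable {X Y : Type*} [TopologicalSpace X] [TopologicalSpace Y]

theorem Topology.IsInducing.isNowhereDense_preimage {f : X → Y} (hf : IsInducing f)
    (hr : range f ⊆ interior (closure (range f))) {s : Set Y} (hs : IsNowhereDense s) :
    IsNowhereDense (f ⁻¹' s) := by
  rw [IsNowhereDense, eq_empty_iff_forall_notMem]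
  intro x hx
  obtain ⟨O, hO, hOW⟩ := hf.isOpen_iff.1 (isOpen_interior (s := closure (f ⁻¹' s)))
  set O' := O ∩ interior (closure (range f))
  have hO' : IsOpen O' := hO.inter isOpen_interior
  have hrange : O' ∩ range f ⊆ closure s := by
    rintro _ ⟨⟨hzO, -⟩, z, rfl⟩
    have hz : z ∈ closure (f ⁻¹' s) := interior_subset (hOW ▸ hzO : z ∈ _)
    exact closure_mono (image_preimage_subset f s)
      (image_closure_subset_closure_image hf.continuous (mem_image_of_mem f hz))
  have hO'sub : O' ⊆ closure s := fun y hy =>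
    closure_minimal hrange isClosed_closure
      (hO'.inter_closure ⟨hy, interior_subset hy.2⟩)
  have hfx : f x ∈ O' := ⟨(hOW ▸ hx : x ∈ f ⁻¹' O), hr (mem_range_self x)⟩
  have := interior_maximal hO'sub hO' hfx
  rwa [hs] at this

theorem Topology.IsInducing.isMeagre_preimage {f : X → Y} (hf : IsInducing f)
    (hr : range f ⊆ interior (closure (range f))) {s : Set Y} (hs : IsMeagre s) :
    IsMeagre (f ⁻¹' s) := by
  obtain ⟨S, hSnd, hSc, hsS⟩ := isMeagre_iff_countable_union_isNowhereDense.1 hs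
  refine isMeagre_iff_countable_union_isNowhereDense.2
    ⟨preimage f '' S, ?_, hSc.image _, ?_⟩
  · rintro _ ⟨t, ht, rfl⟩
    exact hf.isNowhereDense_preimage hr (hSnd t ht)
  · rw [sUnion_image, ← preimage_iUnion₂, ← sUnion_eq_biUnion]
    exact preimage_mono hsS

theorem subset_closure_of_isMeagre_diff [BaireSpace X] {I G : Set X} (hI : IsOpen I)
    (h : IsMeagre (I \ G)) : I ⊆ closure G := by
  intro x hx
  by_contra hxG
  exact not_isMeagre_of_isOpen (hI.sdiff isClosed_closure) ⟨x, hx, hxG⟩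
    (h.mono (sdiff_subset_sdiff_right subset_closure))

theorem Set.Countable.isMeagre [T1Space X] [∀ x : X, NeBot (𝓝[≠] x)] {s : Set X}
    (hs : s.Countable) : IsMeagre s := by
  rw [← biUnion_of_singleton s]
  refine isMeagre_biUnion hs fun x _ => IsNowhereDense.isMeagre ?_
  rw [IsNowhereDense, closure_singleton, interior_singleton]

instance {α : Type*} [TopologicalSpace α] [Nontrivial α] (x : ℕ → α) : NeBot (𝓝[≠] x) := by
  choose c hc using fun n => exists_ne (x n)
  have hlim : Tendsto (fun n => Function.update x n (c n)) atTop (𝓝[≠] x) := by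
    refine tendsto_nhdsWithin_iff.2 ⟨tendsto_pi_nhds.2 fun k => tendsto_const_nhds.congr' ?_,
      Eventually.of_forall fun n h => hc n ?_⟩
    · filter_upwards [eventually_gt_atTop k] with n hn
      exact (Function.update_of_ne hn.ne _ _).symm
    · simpa using congrFun h n
  exact hlim.neBot

theorem countable_setOf_eventuallyConst {α : Type*} [Countable α] :
    {x : ℕ → α | EventuallyConst x atTop}.Countable := by
  refine (countable_iUnion fun n => countable_range
    fun p : (Fin n → α) × α => fun i => if h : i < n then p.1 ⟨i, h⟩ else p.2).mono ?_
  intro x hx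
  obtain ⟨n, hn⟩ := eventuallyConst_atTop.1 hx
  refine mem_iUnion.2 ⟨n, (fun i => x i, x n), funext fun i => ?_⟩
  dsimp only
  split_ifs with h
  · rfl
  · exact (hn i (not_lt.1 h)).symm

theorem IsClosedMap.isEmbedding_domRestrict {f : X → Y} (hf : IsClosedMap f) (hc : Continuous f)
    {s : Set X} (hs : ∀ x ∈ s, ∀ y, f x = f y → x = y) : IsEmbedding (s.domRestrict f) := by
  have hpre : s = f ⁻¹' (f '' s) := by
    refine (subset_preimage_image f s).antisymm ?_
    rintro y ⟨x, hx, hxy⟩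
    exact hs x hx y hxy ▸ hx
  have hinj : Function.Injective ((f '' s).restrictPreimage f) := fun a b hab => by
    obtain ⟨x, hx, hxa⟩ := a.2
    have hxb : f x = f b := hxa.trans (congrArg Subtype.val hab)
    exact Subtype.ext ((hs x hx a hxa).symm.trans (hs x hx b hxb))
  have hr := IsClosedEmbedding.of_continuous_injective_isClosedMap hc.restrictPreimage hinj
    (hf.restrictPreimage _)
  exact IsEmbedding.subtypeVal.comp (hr.isEmbedding.comp (Homeomorph.setCongr hpre).isEmbedding)

end Meagre

/-- A homeomorphism between a comeagre subset of `X` and a comeagre subset of the open set `I`: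
it transports meagre sets and the Baire property both ways. -/
structure IsComeagreEmbedding {X Y : Type*} [TopologicalSpace X] [TopologicalSpace Y]
    (ψ : X → Y) (H : Set X) (I : Set Y) : Prop where
  continuous : Continuous ψ
  isMeagre_compl : IsMeagre Hᶜ
  isEmbedding_domRestrict : IsEmbedding (H.domRestrict ψ)
  isOpen : IsOpen I
  image_subset : ψ '' H ⊆ I
  isMeagre_diff_image : IsMeagre (I \ ψ '' H)

namespace IsComeagreEmbedding

variable {X Y : Type*} [TopologicalSpace X] [TopologicalSpace Y] {ψ : X → Y} {H : Set X}
  {I : Set Y}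

theorem dense [BaireSpace X] (h : IsComeagreEmbedding ψ H I) : Dense H :=
  dense_of_mem_residual (compl_compl H ▸ h.isMeagre_compl)

theorem homeomorph_comp {Z : Type*} [TopologicalSpace Z] (h : IsComeagreEmbedding ψ H I)
    (e : Y ≃ₜ Z) : IsComeagreEmbedding (e ∘ ψ) H (e '' I) where
  continuous := e.continuous.comp h.continuous
  isMeagre_compl := h.isMeagre_compl
  isEmbedding_domRestrict := e.isEmbedding.comp h.isEmbedding_domRestrict
  isOpen := e.isOpenMap I h.isOpen
  image_subset := by
    rw [image_comp]
    exact image_mono h.image_subset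
  isMeagre_diff_image := by
    rw [image_comp, ← image_sdiff e.injective]
    exact e.isInducing.isMeagre_image h.isMeagre_diff_image

theorem prodMap {X' Y' : Type*} [TopologicalSpace X'] [TopologicalSpace Y'] {ψ' : X' → Y'}
    {H' : Set X'} {I' : Set Y'} (h : IsComeagreEmbedding ψ H I)
    (h' : IsComeagreEmbedding ψ' H' I') :
    IsComeagreEmbedding (Prod.map ψ ψ') (H ×ˢ H') (I ×ˢ I') where
  continuous := h.continuous.prodMap h'.continuous
  isMeagre_compl := by
    rw [compl_prod_eq_union, prod_univ, univ_prod]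
    exact (h.isMeagre_compl.preimage_of_isOpenMap continuous_fst isOpenMap_fst).union
      (h'.isMeagre_compl.preimage_of_isOpenMap continuous_snd isOpenMap_snd)
  isEmbedding_domRestrict :=
    (h.isEmbedding_domRestrict.prodMap h'.isEmbedding_domRestrict).comp
      (Homeomorph.Set.prod H H').isEmbedding
  isOpen := h.isOpen.prod h'.isOpen
  image_subset := by
    rw [prodMap_image_prod]
    exact prod_mono h.image_subset h'.image_subset
  isMeagre_diff_image := by
    rw [prodMap_image_prod]
    refine ((h.isMeagre_diff_image.preimage_of_isOpenMap continuous_fst isOpenMap_fst).union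
      (h'.isMeagre_diff_image.preimage_of_isOpenMap continuous_snd isOpenMap_snd)).mono ?_
    rintro ⟨y, y'⟩ ⟨⟨hy, hy'⟩, hyy'⟩
    by_cases hyH : y ∈ ψ '' H
    · exact Or.inr ⟨hy', fun hy'H => hyy' ⟨hyH, hy'H⟩⟩
    · exact Or.inl ⟨hy, hyH⟩

theorem isMeagre_image_inter [BaireSpace X] (h : IsComeagreEmbedding ψ H I) {P : Set X}
    (hP : IsMeagre P) : IsMeagre (ψ '' (P ∩ H)) := by
  have hval : IsMeagre (((↑) : H → X) ⁻¹' P) :=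
    IsInducing.subtypeVal.isMeagre_preimage (by simp [h.dense.closure_eq]) hP
  rw [← image_domRestrict]
  exact h.isEmbedding_domRestrict.isInducing.isMeagre_image hval

theorem isMeagre_preimage [BaireSpace Y] (h : IsComeagreEmbedding ψ H I) {M : Set Y}
    (hM : IsMeagre M) : IsMeagre (ψ ⁻¹' M) := by
  have hI : I ⊆ interior (closure (ψ '' H)) :=
    interior_maximal (subset_closure_of_isMeagre_diff h.isOpen h.isMeagre_diff_image) h.isOpen
  have hH : IsMeagre (H.domRestrict ψ ⁻¹' M) :=
    h.isEmbedding_domRestrict.isInducing.isMeagre_preimage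
      (by simpa using h.image_subset.trans hI) hM
  refine (h.isMeagre_compl.union hH.image_val).mono fun x hx => ?_
  by_cases hxH : x ∈ H
  · exact Or.inr ⟨⟨x, hxH⟩, hx, rfl⟩
  · exact Or.inl hxH

theorem hasBaireProperty_preimage [BaireSpace Y] (h : IsComeagreEmbedding ψ H I) {S : Set Y}
    (hS : HasBaireProperty S) : HasBaireProperty (ψ ⁻¹' S) := by
  obtain ⟨U, M, hU, hM, rfl⟩ := hS
  exact ⟨ψ ⁻¹' U, ψ ⁻¹' M, hU.preimage h.continuous, h.isMeagre_preimage hM,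
    preimage_symmDiff U M⟩

theorem exists_isOpen_image_inter (h : IsComeagreEmbedding ψ H I) {u : Set X} (hu : IsOpen u) :
    ∃ O, IsOpen O ∧ O ⊆ I ∧ ψ '' (u ∩ H) ⊆ O ∧ IsMeagre (O \ ψ '' (u ∩ H)) := by
  obtain ⟨O, hO, hOu⟩ :=
    h.isEmbedding_domRestrict.isInducing.isOpen_iff.1 (hu.preimage continuous_subtype_val)
  have hmem : ∀ x (hx : x ∈ H), ψ x ∈ O ↔ x ∈ u := fun x hx =>
    Iff.of_eq (congrArg ((⟨x, hx⟩ : H) ∈ ·) hOu)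
  refine ⟨O ∩ I, hO.inter h.isOpen, inter_subset_right, ?_, ?_⟩
  · rintro _ ⟨x, ⟨hxu, hxH⟩, rfl⟩
    exact ⟨(hmem x hxH).2 hxu, h.image_subset ⟨x, hxH, rfl⟩⟩
  · refine h.isMeagre_diff_image.mono ?_
    rintro y ⟨⟨hyO, hyI⟩, hyu⟩
    refine ⟨hyI, ?_⟩
    rintro ⟨x, hxH, rfl⟩
    exact hyu ⟨x, ⟨(hmem x hxH).1 hyO, hxH⟩, rfl⟩

theorem nowhereMeager_preimage [BaireSpace X] (h : IsComeagreEmbedding ψ H I) {S : Set Y}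
    (hS : ∀ U, IsOpen U → U ⊆ I → U.Nonempty → ¬IsMeagre (S ∩ U)) :
    NowhereMeager (ψ ⁻¹' S) := by
  intro u hu hne hmeagre
  obtain ⟨O, hO, hOI, hsub, hdiff⟩ := h.exists_isOpen_image_inter hu
  obtain ⟨x, hx⟩ := h.dense.inter_open_nonempty u hu hne
  refine hS O hO hOI ⟨ψ x, hsub (mem_image_of_mem ψ hx)⟩
    (((h.isMeagre_image_inter hmeagre).union hdiff).mono ?_)
  rintro y ⟨hyS, hyO⟩
  by_cases hy : y ∈ ψ '' (u ∩ H)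
  · obtain ⟨x, ⟨hxu, hxH⟩, rfl⟩ := hy
    exact Or.inl ⟨x, ⟨⟨hyS, hxu⟩, hxH⟩, rfl⟩
  · exact Or.inr ⟨hyO, hy⟩

theorem exists_baireFunction_eq {Z : Type*} [TopologicalSpace Z] [Nonempty Z]
    (h : IsComeagreEmbedding ψ H I) {k : X → Z} (hk : Continuous k) :
    ∃ g : Y → Z, BaireFunction g ∧ ∀ x ∈ H, g (ψ x) = k x := by
  classical
  have hBP : HasBaireProperty (range (H.domRestrict ψ)) := by
    rw [range_domRestrict, hasBaireProperty_iff_baireMeasurableSet,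
      ← sdiff_sdiff_cancel_left h.image_subset]
    exact h.isOpen.baireMeasurableSet.diff h.isMeagre_diff_image.baireMeasurableSet
  set e := h.isEmbedding_domRestrict.toHomeomorph
  refine ⟨_, baireFunction_dite hBP (hk.comp (continuous_subtype_val.comp e.symm.continuous))
    (Classical.arbitrary Z), fun x hx => ?_⟩
  have hmem : ψ x ∈ range (H.domRestrict ψ) := ⟨⟨x, hx⟩, rfl⟩
  rw [dif_pos hmem]
  exact congrArg (k ∘ Subtype.val) (h.isEmbedding_domRestrict.toHomeomorph_symm_apply ⟨x, hx⟩)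

end IsComeagreEmbedding

namespace Real

theorem ofDigits_pos {b : ℕ} {a : ℕ → Fin b} (h : ∃ i, (a i : ℕ) ≠ 0) : 0 < ofDigits a := by
  obtain ⟨i, hi⟩ := h
  refine summable_ofDigitsTerm.tsum_pos (fun _ => ofDigitsTerm_nonneg) i ?_
  have hb : 0 < b := Fin.pos (a 0)
  unfold ofDigitsTerm
  positivity

theorem ofDigits_lt_one {b : ℕ} [NeZero b] {a : ℕ → Fin (b + 1)} (h : ∃ i, a i ≠ Fin.last b) :
    ofDigits a < 1 := by
  obtain ⟨i, hi⟩ := h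
  rw [← ofDigits_const_last_eq_one b]
  refine summable_ofDigitsTerm.tsum_lt_tsum (i := i) (fun j => ?_) ?_ summable_ofDigitsTerm
  · unfold ofDigitsTerm
    gcongr
    exact Fin.le_last _
  · unfold ofDigitsTerm
    gcongr
    exact Fin.lt_last_iff_ne_last.2 hi

end Real

noncomputable def ofBits (x : ℕ → Bool) : ℝ :=
  Real.ofDigits fun n => if x n then (1 : Fin 2) else 0

theorem continuous_ofBits : Continuous ofBits :=
  Real.continuous_ofDigits.comp <| continuous_pi fun n =>
    (continuous_of_discreteTopology (f := fun b : Bool => if b then (1 : Fin 2) else 0)).comp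
      (continuous_apply n)

theorem Icc_subset_range_ofBits : Icc 0 1 ⊆ range ofBits := by
  intro y hy
  obtain ⟨a, -, rfl⟩ := Real.ofDigits_SurjOn one_lt_two hy
  refine ⟨fun n => a n = 1, congrArg Real.ofDigits (funext fun n => ?_)⟩
  simp only [decide_eq_true_eq]
  generalize a n = d
  fin_cases d <;> rfl

theorem ofBits_eq_add (x : ℕ → Bool) :
    ofBits x = ((if x 0 then 1 else 0) + ofBits fun i => x (i + 1)) / 2 := by
  rw [ofBits, Real.ofDigits_eq_sum_add_ofDigits _ 1, ofBits]
  cases h : x 0 <;> simp [Real.ofDigitsTerm, h] <;> ring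

theorem not_eventuallyConst_shift {x : ℕ → Bool} (hx : ¬EventuallyConst x atTop) (n : ℕ) :
    ¬EventuallyConst (fun i => x (i + n)) atTop := by
  rwa [EventuallyConst, ← Function.comp_def, ← map_map, map_add_atTop_eq_nat]

theorem ofBits_mem_Ioo {x : ℕ → Bool} (hx : ¬EventuallyConst x atTop) : ofBits x ∈ Ioo 0 1 := by
  have hex : ∀ c, ∃ i, x i ≠ c := fun c => by
    by_contra! h
    exact hx ((EventuallyConst.const c).congr (Eventually.of_forall fun i => (h i).symm))
  obtain ⟨i, hi⟩ := hex false
  obtain ⟨j, hj⟩ := hex true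
  refine ⟨Real.ofDigits_pos ⟨i, ?_⟩, Real.ofDigits_lt_one ⟨j, ?_⟩⟩ <;> simp_all

theorem ofBits_mem_Icc (x : ℕ → Bool) : ofBits x ∈ Icc 0 1 :=
  ⟨Real.ofDigits_nonneg _, Real.ofDigits_le_one _⟩

theorem ofBits_ne_of_apply_zero_ne {x y : ℕ → Bool} (hx : ¬EventuallyConst x atTop)
    (h : x 0 ≠ y 0) : ofBits x ≠ ofBits y := by
  have hx' := ofBits_mem_Ioo (not_eventuallyConst_shift hx 1)
  have hy' := ofBits_mem_Icc fun i => y (i + 1)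
  rw [ofBits_eq_add x, ofBits_eq_add y]
  cases hx0 : x 0 <;> cases hy0 : y 0 <;> simp only [hx0, hy0, ne_eq, not_true_eq_false] at h
  all_goals norm_num; linarith [hx'.1, hx'.2, hy'.1, hy'.2]

theorem ofBits_shift_eq {x y : ℕ → Bool} {n : ℕ} (hxy : ∀ i < n, x i = y i)
    (h : ofBits x = ofBits y) : ofBits (fun i => x (i + n)) = ofBits fun i => y (i + n) := by
  have hx := Real.ofDigits_eq_sum_add_ofDigits (fun i => if x i then (1 : Fin 2) else 0) n
  have hy := Real.ofDigits_eq_sum_add_ofDigits (fun i => if y i then (1 : Fin 2) else 0) n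
  have hsum : ∑ i ∈ Finset.range n, Real.ofDigitsTerm (fun i => if x i then (1 : Fin 2) else 0) i
      = ∑ i ∈ Finset.range n, Real.ofDigitsTerm (fun i => if y i then (1 : Fin 2) else 0) i :=
    Finset.sum_congr rfl fun i hi => by simp only [Real.ofDigitsTerm, hxy i (Finset.mem_range.1 hi)]
  unfold ofBits at h ⊢
  rw [hx, hy, hsum] at h
  exact mul_left_cancel₀ (by positivity) (add_left_cancel h)

theorem eq_of_ofBits_eq {x y : ℕ → Bool} (hx : ¬EventuallyConst x atTop)
    (h : ofBits x = ofBits y) : x = y := by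
  classical
  by_contra hne
  have hex : ∃ n, x n ≠ y n := Function.ne_iff.1 hne
  refine ofBits_ne_of_apply_zero_ne (not_eventuallyConst_shift hx (Nat.find hex))
    (by simpa using Nat.find_spec hex) (ofBits_shift_eq (fun i hi => ?_) h)
  exact not_not.1 (Nat.find_min hex hi)

theorem isComeagreEmbedding_ofBits :
    IsComeagreEmbedding ofBits {x | ¬EventuallyConst x atTop} (Ioo 0 1) where
  continuous := continuous_ofBits
  isMeagre_compl := by
    simpa only [compl_ofPred, not_not] using countable_setOf_eventuallyConst.isMeagre
  isEmbedding_domRestrict := continuous_ofBits.isClosedMap.isEmbedding_domRestrict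
    continuous_ofBits fun _ hx _ hxy => eq_of_ofBits_eq hx hxy
  isOpen := isOpen_Ioo
  image_subset := image_subset_iff.2 fun _ hx => ofBits_mem_Ioo hx
  isMeagre_diff_image := by
    refine (countable_setOf_eventuallyConst.image ofBits).isMeagre.mono ?_
    rintro t ⟨ht, htH⟩
    obtain ⟨x, rfl⟩ := Icc_subset_range_ofBits (Ioo_subset_Icc_self ht)
    exact ⟨x, not_not.1 fun hx => htH ⟨x, hx, rfl⟩, rfl⟩

theorem exists_isComeagreEmbedding_subset {O : Set ℝ} (hO : IsOpen O) (hne : O.Nonempty) :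
    ∃ (ψ : (ℕ → Bool) → ℝ) (H : Set (ℕ → Bool)) (I : Set ℝ),
      I ⊆ O ∧ IsComeagreEmbedding ψ H I := by
  obtain ⟨a, b, hab, hsub⟩ := hO.exists_Ioo_subset hne
  have hba : 0 < b - a := sub_pos.2 hab
  have h := isComeagreEmbedding_ofBits.homeomorph_comp (affineHomeomorph (b - a) a hba.ne')
  rw [affineHomeomorph_image_Ioo _ _ _ _ hba] at h
  exact ⟨_, _, _, by simpa using hsub, h⟩

theorem stmt_3 (hH : HypH) (F : ℝ × ℝ → ℝ) (hF : BaireSupMeasurable F) :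
    BaireFunction F := by
  intro W hW
  by_contra hE
  obtain ⟨V, hV, ⟨⟨p, q⟩, hpq⟩, hEV⟩ := exists_isOpen_forall_not_isMeagre hE
  obtain ⟨u, v, hu, hv, hpu, hqv, huv⟩ := isOpen_prod_iff.1 hV p q hpq
  obtain ⟨ψ₁, H₁, I₁, hI₁, h₁⟩ := exists_isComeagreEmbedding_subset hu ⟨p, hpu⟩
  obtain ⟨ψ₂, H₂, I₂, hI₂, h₂⟩ := exists_isComeagreEmbedding_subset hv ⟨q, hqv⟩
  have hI : I₁ ×ˢ I₂ ⊆ V := (prod_mono hI₁ hI₂).trans huv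
  obtain ⟨f, hf⟩ := hH (Prod.map ψ₁ ψ₂ ⁻¹' (F ⁻¹' W))
    ((h₁.prodMap h₂).nowhereMeager_preimage fun U hU hUI hne =>
      (hEV U hU (hUI.trans hI) hne).1)
    ((h₁.prodMap h₂).nowhereMeager_preimage fun U hU hUI hne =>
      (hEV U hU (hUI.trans hI) hne).2)
  obtain ⟨g, hg, hgψ⟩ := h₁.exists_baireFunction_eq (h₂.continuous.comp f.continuous)
  refine hf ((h₁.hasBaireProperty_preimage (hF g hg W hW)).congr
    (h₁.isMeagre_compl.mono fun x hx => ?_))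
  intro hxH
  simp [mem_symmDiff, hgψ x hxH] at hx
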